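/- For every t ≥ 2 there is a constant c such that any t-ary tree with path length p ≥ 2 has at most p/(log_t p − c·log log p) nodes, for all sufficiently large p; in particular the number of nodes is at most (p/log_t p)(1+o(1)) as p → ∞. -/

import Mathlib

/-- A `t`-ary tree: either empty, or a root node with `t` ordered subtrees. -/
inductive TAry (t : ℕ) : Type where
  | nil : TAry t
  | node : (Fin t → TAry t) → TAry t

namespace TAry

variable {t : ℕ}

/-- Number of nodes of a `t`-ary tree. -/
def size : TAry t → ℕ
  | nil => 0
  | node c => 1 + ∑ i, (c i).size

/-- Sum over nodes of `d +` (depth of the node). -/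
def plFrom : TAry t → ℕ → ℕ
  | nil, _ => 0
  | node c, d => d + ∑ i, (c i).plFrom (d + 1)

/-- Path length: the sum of the depths of all nodes. -/
def pathLength (T : TAry t) : ℕ := T.plFrom 0

/-- Number of nodes at depth `j` (the profile `D_j`). -/
def depthCount : ℕ → TAry t → ℕ
  | _, nil => 0
  | 0, node _ => 1
  | j + 1, node c => ∑ i, depthCount j (c i)

/-- Number of leaves (nodes all of whose subtrees are empty). -/
def leaves : TAry t → ℕ
  | nil => 0
  | node c => max 1 (∑ i, (c i).leaves)

end TAry

namespace TAry
variable {t : ℕ}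

/-- Every internal (non-leaf) node has exactly one child. -/
def chain : TAry t → Prop
  | nil => True
  | node c => (∀ i, c i = nil) ∨ ∃ i, c i ≠ nil ∧ chain (c i) ∧ ∀ j, j ≠ i → c j = nil

/-- Number of leaves at depth `j`. -/
def leavesAt : ℕ → TAry t → ℕ
  | _, nil => 0
  | 0, node c => if (∑ i, (c i).size) = 0 then 1 else 0
  | j + 1, node c => ∑ i, leavesAt j (c i)

/-- The subtree of `T` at position `pos` (empty tree if the position is invalid). -/
def getAt : TAry t → List (Fin t) → TAry t
  | T, [] => T
  | nil, _ :: _ => nil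
  | node c, i :: rest => getAt (c i) rest

/-- Replace the subtree of `T` at position `pos` by `τ`. -/
def replaceAt : TAry t → List (Fin t) → TAry t → TAry t
  | _, [], τ => τ
  | nil, _ :: _, _ => nil
  | node c, i :: rest, τ => node (fun j => if j = i then replaceAt (c i) rest τ else c j)

/-- Attach the trees `τs i` at the positions `pos i`, for `i = 0, …, ℓ-1`. -/
def attachAll {ℓ : ℕ} (T : TAry t) (pos : Fin ℓ → List (Fin t)) (τs : Fin ℓ → TAry t) :
    TAry t :=
  (List.finRange ℓ).foldl (fun A i => replaceAt A (pos i) (τs i)) T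

end TAry

/-- The binary entropy function (natural logarithm). -/
noncomputable def binEnt (x : ℝ) : ℝ := -x * Real.log x - (1 - x) * Real.log (1 - x)

/-- Number of `t`-ary trees with exactly `n` nodes. -/
noncomputable def Ct (t n : ℕ) : ℕ := Nat.card {T : TAry t // T.size = n}

/-- Number of `t`-ary trees with path length exactly `p`. -/
noncomputable def Tt (t p : ℕ) : ℕ := Nat.card {T : TAry t // T.pathLength = p}

/-!
At most `1 + t + ⋯ + t ^ (m - 1) ≤ t ^ m` nodes have depth `< m`, and each of the others adds at
least `m` to the path length, so a tree with `n` nodes and path length `p` has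
`n ≤ p / m + t ^ m` for every `m ≥ 1`. With `m = ⌈log_t p - 2 log_t log p⌉` the term `t ^ m` is at
most `t p / (log p)²`, which is absorbed by the gap between `p / m` and
`p / (log_t p - c log log p)` once `c = 2 / log t + 1`.
-/

open Filter Real Topology

namespace TAry

variable {t : ℕ}

lemma plFrom_eq_pathLength_add (T : TAry t) (d : ℕ) :
    T.plFrom d = T.pathLength + d * T.size := by
  induction T generalizing d with
  | nil => simp [plFrom, pathLength, size]
  | node c ih =>
    rw [pathLength, plFrom, plFrom, size]
    simp only [ih, Finset.sum_add_distrib, ← Finset.mul_sum]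
    ring

lemma pathLength_node (c : Fin t → TAry t) :
    (node c).pathLength = ∑ i, ((c i).pathLength + (c i).size) := by
  rw [pathLength, plFrom]
  simp only [plFrom_eq_pathLength_add, zero_add, one_mul]

lemma mul_size_le_pathLength_add_mul_pow (ht : 2 ≤ t) (T : TAry t) (m : ℕ) :
    m * T.size ≤ T.pathLength + m * t ^ m := by
  induction T generalizing m with
  | nil => simp [size]
  | node c ih =>
    cases m with
    | zero => simp
    | succ k =>
      have hchild (i : Fin t) : (k + 1) * (c i).size ≤
          ((c i).pathLength + (c i).size) + k * t ^ k := by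
        nlinarith [ih i k]
      have hsum := Finset.sum_le_sum fun i (_ : i ∈ Finset.univ) => hchild i
      have hroot : k + 1 ≤ t ^ (k + 1) :=
        ((k + 1).lt_two_pow_self.le).trans (Nat.pow_le_pow_left ht _)
      rw [Finset.sum_add_distrib, Finset.sum_const, Finset.card_univ, Fintype.card_fin,
        smul_eq_mul, ← Finset.mul_sum] at hsum
      have hpow : t * (k * t ^ k) = k * t ^ (k + 1) := by ring
      rw [pathLength_node, size]
      nlinarith

lemma size_le_pathLength_div_add_pow (ht : 2 ≤ t) (T : TAry t) {m : ℕ} (hm : 0 < m) :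
    (T.size : ℝ) ≤ T.pathLength / m + (t : ℝ) ^ m := by
  have hmR : (0 : ℝ) < m := by exact_mod_cast hm
  have key : ((m * T.size : ℕ) : ℝ) ≤ ((T.pathLength + m * t ^ m : ℕ) : ℝ) := by
    exact_mod_cast mul_size_le_pathLength_add_mul_pow ht T m
  push_cast at key
  rw [div_add' _ _ _ hmR.ne', le_div_iff₀ hmR]
  linarith

lemma size_le_div_logb_mul_one_add {p : ℕ} (ht : 2 ≤ t) (hp : 2 ≤ p) (T : TAry t)
    (hT : T.pathLength = p) :
    (T.size : ℝ) ≤ p / logb t p * (1 + t * logb t p) := by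
  have hsize := T.size_le_pathLength_div_add_pow ht one_pos
  rw [hT] at hsize
  push_cast at hsize
  have hpR : (2 : ℝ) ≤ p := by exact_mod_cast hp
  have htR : (2 : ℝ) ≤ t := by exact_mod_cast ht
  have hL : 0 < logb t p := logb_pos (by linarith) (by linarith)
  have hexpand : (p : ℝ) / logb t p * (1 + t * logb t p) = p / logb t p + p * t := by
    field_simp
  have : 0 < (p : ℝ) / logb t p := by positivity
  rw [hexpand]
  nlinarith

end TAry

lemma tendsto_log_log_div_logb {t : ℝ} (ht : 1 < t) :
    Tendsto (fun x => log (log x) / logb t x) atTop (𝓝 0) := by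
  have h := (isLittleO_log_id_atTop.tendsto_div_nhds_zero.comp tendsto_log_atTop).const_mul
    (log t)
  rw [mul_zero] at h
  refine h.congr fun x => ?_
  simp only [Function.comp_apply, id, ← log_div_log]
  field_simp [(log_pos ht).ne']

lemma tendsto_logb_sub_mul_log_log {t : ℝ} (ht : 1 < t) (c : ℝ) :
    Tendsto (fun x => logb t x - c * log (log x)) atTop atTop := by
  have h : Tendsto (fun x => 1 - c * (log (log x) / logb t x)) atTop (𝓝 1) := by
    simpa using ((tendsto_log_log_div_logb ht).const_mul c).const_sub 1
  refine ((tendsto_log_atTop.atTop_div_const (log_pos ht)).atTop_mul_pos one_pos h).congr' ?_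
  filter_upwards [eventually_gt_atTop 1] with x hx
  have hL : logb t x ≠ 0 := (logb_pos ht hx).ne'
  rw [log_div_log]
  field_simp

lemma exists_nat_div_add_pow_le {t p : ℝ} (ht : 1 < t) (hp : 1 < p)
    (hA : 0 < logb t p - (2 / log t + 1) * log (log p))
    (hη : t ≤ log (log p) * log t ^ 2) :
    ∃ m : ℕ, 0 < m ∧ p / m + t ^ m ≤ p / (logb t p - (2 / log t + 1) * log (log p)) := by
  set ℓ := log p
  set η := log ℓ
  set A := logb t p - (2 / log t + 1) * η
  have hlt : 0 < log t := log_pos ht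
  have hη0 : 0 < η := by
    by_contra! h
    nlinarith [sq_nonneg (log t)]
  have hℓ : 1 < ℓ := (log_pos_iff (log_pos hp).le).mp hη0
  set x := logb t p - 2 * logb t ℓ
  have hxA : x = A + η := by
    simp only [x, A, η, ← log_div_log]
    ring
  have hxL : x ≤ logb t p := by linarith [logb_nonneg ht hℓ.le]
  have hx0 : 0 < x := by linarith
  have hceil : x ≤ ⌈x⌉₊ := Nat.le_ceil x
  refine ⟨⌈x⌉₊, by exact_mod_cast hx0.trans_le hceil, ?_⟩
  have hpow : t ^ ⌈x⌉₊ ≤ t * p / ℓ ^ 2 := by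
    rw [← rpow_natCast, ← le_logb_iff_rpow_le ht (by positivity), logb_div (by positivity)
      (by positivity), logb_mul (by positivity) (by positivity), logb_self_eq_one ht, logb_pow]
    push_cast
    linarith [Nat.ceil_lt_add_one hx0.le]
  have hdiv : p / ⌈x⌉₊ ≤ p / x := div_le_div_of_nonneg_left (by positivity) hx0 hceil
  have hℓL : ℓ = logb t p * log t := by rw [← log_div_log, div_mul_cancel₀ _ hlt.ne']
  have hgap : t * p / ℓ ^ 2 ≤ p / A - p / x := by
    rw [div_sub_div _ _ hA.ne' hx0.ne', div_le_div_iff₀ (by positivity) (by positivity)]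
    have hAx : A * x ≤ logb t p ^ 2 := by nlinarith
    have : t * (A * x) ≤ η * ℓ ^ 2 := by
      rw [hℓL]
      nlinarith [mul_le_mul hη hAx (by positivity) (by positivity)]
    rw [hxA] at this ⊢
    nlinarith [mul_le_mul_of_nonneg_left this (by positivity : (0 : ℝ) ≤ p)]
  linarith

lemma eventually_size_le_div_logb_sub_log_log {t : ℕ} (ht : 2 ≤ t) :
    ∀ᶠ p : ℕ in atTop, 0 < logb t p - (2 / log t + 1) * log (log p) ∧
      ∀ T : TAry t, T.pathLength = p →
        (T.size : ℝ) ≤ p / (logb t p - (2 / log t + 1) * log (log p)) := by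
  have htR : (1 : ℝ) < t := by exact_mod_cast ht
  have hloglog : Tendsto (fun p : ℕ => log (log p)) atTop atTop :=
    tendsto_log_atTop.comp (tendsto_log_atTop.comp tendsto_natCast_atTop_atTop)
  filter_upwards [eventually_gt_atTop 1, hloglog.eventually_ge_atTop (t / log t ^ 2),
    ((tendsto_logb_sub_mul_log_log htR _).comp tendsto_natCast_atTop_atTop).eventually_gt_atTop 0]
    with p hp hηp hA
  refine ⟨hA, fun T hT => ?_⟩
  have hηp' : (t : ℝ) ≤ log (log p) * log t ^ 2 := by
    rwa [div_le_iff₀ (by have := log_pos htR; positivity)] at hηp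
  obtain ⟨m, hm, hbound⟩ := exists_nat_div_add_pow_le htR (by exact_mod_cast hp) hA hηp'
  calc (T.size : ℝ) ≤ T.pathLength / m + (t : ℝ) ^ m := T.size_le_pathLength_div_add_pow ht hm
    _ ≤ _ := by rwa [hT]

lemma div_mul_one_add_div_one_sub_div {L a : ℝ} (p : ℝ) (hL : L ≠ 0) (ha : L - a ≠ 0) :
    p / L * (1 + a / L / (1 - a / L)) = p / (L - a) := by
  have h1 : 1 - a / L = (L - a) / L := by field_simp
  rw [one_add_div (h1 ▸ div_ne_zero ha hL), sub_add_cancel, h1, one_div_div,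
    div_mul_div_cancel₀ hL]

/-- Any `t`-ary tree with path length `p` has at most `p / (log_t p - c log log p)` nodes
for large `p`; in particular at most `(p / log_t p)(1 + o(1))` nodes as `p → ∞`. -/
theorem stmt10 (t : ℕ) (ht : 2 ≤ t) :
    (∃ c : ℝ, ∃ P₀ : ℕ, ∀ p : ℕ, P₀ ≤ p → ∀ T : TAry t, T.pathLength = p →
      (T.size : ℝ) ≤ (p : ℝ) / (Real.logb t p - c * Real.log (Real.log p))) ∧
    (∃ f : ℕ → ℝ, Filter.Tendsto f Filter.atTop (nhds 0) ∧
      ∀ p : ℕ, 2 ≤ p → ∀ T : TAry t, T.pathLength = p →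
        (T.size : ℝ) ≤ ((p : ℝ) / Real.logb t p) * (1 + f p)) := by
  have htR : (1 : ℝ) < t := by exact_mod_cast ht
  set c := 2 / log t + 1
  obtain ⟨P₀, hP₀⟩ := eventually_atTop.mp (eventually_size_le_div_logb_sub_log_log ht)
  refine ⟨⟨c, P₀, fun p hp => (hP₀ p hp).2⟩, ?_⟩
  set g : ℕ → ℝ := fun p => c * log (log p) / logb t p
  have hg : Tendsto g atTop (𝓝 0) := by
    simpa [g, mul_div_assoc] using
      ((tendsto_log_log_div_logb htR).comp tendsto_natCast_atTop_atTop).const_mul c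
  refine ⟨fun p => if P₀ ≤ p then g p / (1 - g p) else t * logb t p, ?_, fun p hp T hT => ?_⟩
  · refine Tendsto.congr' (eventually_atTop.mpr ⟨P₀, fun p hp => (if_pos hp).symm⟩) ?_
    have h := hg.div (hg.const_sub 1) (by norm_num)
    rwa [sub_zero, zero_div] at h
  dsimp only
  split_ifs with hP
  · obtain ⟨hA, hsize⟩ := hP₀ p hP
    rw [div_mul_one_add_div_one_sub_div _ (logb_pos htR (by exact_mod_cast hp)).ne' hA.ne']
    exact hsize T hT
  · exact T.size_le_div_logb_mul_one_add ht hp hT
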